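/- Let (M, λ_i) be an AP-space on ℝⁿ with n ≥ 2. The tensor B^α_{μνσ} := R̂^α_{μνσ} − (1/(2(n−1))) { δ^α_μ ∂_ν C_σ − δ^α_μ ∂_σ C_ν + δ^α_σ C_{μ ĥ|ν} − δ^α_ν C_{μ ĥ|σ} − (1/(2(n−1))) δ^α_ν C_μ C_σ + (1/(2(n−1))) δ^α_σ C_μ C_ν } is conformally invariant: for every conformal change λ̄_i = e^{−ρ} λ_i with smooth ρ, the tensor B̄ built from the λ̄_i equals B. -/

import Mathlib

open scoped BigOperators

noncomputable section

/-- Kronecker delta as a real number. -/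
def kron {n : ℕ} (α μ : Fin n) : ℝ := if α = μ then 1 else 0

/-- Partial derivative `∂_ν f` of a scalar function on ℝⁿ. -/
def pd {n : ℕ} (ν : Fin n) (f : (Fin n → ℝ) → ℝ) (x : Fin n → ℝ) : ℝ :=
  fderiv ℝ f x (Pi.single ν 1)

/-- Weitzenböck connection `Γ^α_{μν} = Σ_i λ_i^α ∂_ν λ_{i,μ}`. -/
def Wconn {n : ℕ} (lam lamCov : Fin n → (Fin n → ℝ) → Fin n → ℝ)
    (α μ ν : Fin n) (x : Fin n → ℝ) : ℝ :=
  ∑ i, lam i x α * pd ν (fun y => lamCov i y μ) x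

/-- Torsion `Λ^α_{μν}` of the Weitzenböck connection. -/
def tors {n : ℕ} (lam lamCov : Fin n → (Fin n → ℝ) → Fin n → ℝ)
    (α μ ν : Fin n) (x : Fin n → ℝ) : ℝ :=
  Wconn lam lamCov α μ ν x - Wconn lam lamCov α ν μ x

/-- Contracted torsion (basic vector) `C_μ = Λ^ε_{εμ}`. -/
def Cvec {n : ℕ} (lam lamCov : Fin n → (Fin n → ℝ) → Fin n → ℝ)
    (μ : Fin n) (x : Fin n → ℝ) : ℝ :=
  ∑ ε, tors lam lamCov ε ε μ x

/-- Metric `g_{μν} = Σ_i λ_{i,μ} λ_{i,ν}`. -/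
def gmet {n : ℕ} (lamCov : Fin n → (Fin n → ℝ) → Fin n → ℝ)
    (μ ν : Fin n) (x : Fin n → ℝ) : ℝ :=
  ∑ i, lamCov i x μ * lamCov i x ν

/-- Inverse metric `g^{μν} = Σ_i λ_i^μ λ_i^ν`. -/
def ginv {n : ℕ} (lam : Fin n → (Fin n → ℝ) → Fin n → ℝ)
    (μ ν : Fin n) (x : Fin n → ℝ) : ℝ :=
  ∑ i, lam i x μ * lam i x ν

/-- Levi-Civita connection (Christoffel symbols) of the metric `g`. -/
def LC {n : ℕ} (lam lamCov : Fin n → (Fin n → ℝ) → Fin n → ℝ)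
    (α μ ν : Fin n) (x : Fin n → ℝ) : ℝ :=
  (1/2) * ∑ ε, ginv lam α ε x *
    (pd μ (fun y => gmet lamCov ε ν y) x + pd ν (fun y => gmet lamCov ε μ y) x
      - pd ε (fun y => gmet lamCov μ ν y) x)

/-- Curvature tensor `R[A]^α_{μνσ}` of connection coefficients `A`. -/
def curv {n : ℕ} (A : Fin n → Fin n → Fin n → (Fin n → ℝ) → ℝ)
    (α μ ν σ : Fin n) (x : Fin n → ℝ) : ℝ :=
  pd ν (A α μ σ) x - pd σ (A α μ ν) x
    + ∑ ε, A ε μ σ x * A α ε ν x - ∑ ε, A ε μ ν x * A α ε σ x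

/-- Conformal change of the contravariant components: `λ̄_i^μ = e^{-ρ} λ_i^μ`. -/
def confLam {n : ℕ} (ρ : (Fin n → ℝ) → ℝ) (lam : Fin n → (Fin n → ℝ) → Fin n → ℝ) :
    Fin n → (Fin n → ℝ) → Fin n → ℝ :=
  fun i x μ => Real.exp (-(ρ x)) * lam i x μ

/-- Conformal change of the covariant components: `λ̄_{i,μ} = e^{ρ} λ_{i,μ}`. -/
def confLamCov {n : ℕ} (ρ : (Fin n → ℝ) → ℝ) (lamCov : Fin n → (Fin n → ℝ) → Fin n → ℝ) :
    Fin n → (Fin n → ℝ) → Fin n → ℝ :=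
  fun i x μ => Real.exp (ρ x) * lamCov i x μ

/-- `ρ^α := g^{αε} ρ_ε`. -/
def rhoUp {n : ℕ} (lam : Fin n → (Fin n → ℝ) → Fin n → ℝ) (ρ : (Fin n → ℝ) → ℝ)
    (α : Fin n) (x : Fin n → ℝ) : ℝ :=
  ∑ ε, ginv lam α ε x * pd ε ρ x

/-- `ρ² := ρ^ε ρ_ε`. -/
def rhoSq {n : ℕ} (lam : Fin n → (Fin n → ℝ) → Fin n → ℝ) (ρ : (Fin n → ℝ) → ℝ)
    (x : Fin n → ℝ) : ℝ :=
  ∑ ε, rhoUp lam ρ ε x * pd ε ρ x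

/-- Covariant derivative of a covector field: `X_{μ|ν} = ∂_ν X_μ − A^ε_{μν} X_ε`. -/
def covD {n : ℕ} (A : Fin n → Fin n → Fin n → (Fin n → ℝ) → ℝ)
    (X : Fin n → (Fin n → ℝ) → ℝ) (μ ν : Fin n) (x : Fin n → ℝ) : ℝ :=
  pd ν (X μ) x - ∑ ε, A ε μ ν x * X ε x

/-- Covariant derivative of a vector field: `X^α_{|ν} = ∂_ν X^α + A^α_{εν} X^ε`. -/
def covDUp {n : ℕ} (A : Fin n → Fin n → Fin n → (Fin n → ℝ) → ℝ)
    (X : Fin n → (Fin n → ℝ) → ℝ) (α ν : Fin n) (x : Fin n → ℝ) : ℝ :=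
  pd ν (X α) x + ∑ ε, A α ε ν x * X ε x

/-- Symmetric part `Γ̂^α_{μν}` of the Weitzenböck connection. -/
def symW {n : ℕ} (lam lamCov : Fin n → (Fin n → ℝ) → Fin n → ℝ)
    (α μ ν : Fin n) (x : Fin n → ℝ) : ℝ :=
  (1/2) * (Wconn lam lamCov α μ ν x + Wconn lam lamCov α ν μ x)

/-- The conformally invariant tensor `T^α_{μν}`. -/
def Ttens {n : ℕ} (lam lamCov : Fin n → (Fin n → ℝ) → Fin n → ℝ)
    (α μ ν : Fin n) (x : Fin n → ℝ) : ℝ :=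
  tors lam lamCov α μ ν x
    - ((n : ℝ) - 1)⁻¹ * (kron α μ * Cvec lam lamCov ν x - kron α ν * Cvec lam lamCov μ x)

/-- The conformally invariant tensor `K^α_{μνσ}`. -/
def Ktens {n : ℕ} (lam lamCov : Fin n → (Fin n → ℝ) → Fin n → ℝ)
    (α μ ν σ : Fin n) (x : Fin n → ℝ) : ℝ :=
  ((n : ℝ) - 1)⁻¹ *
    (kron α μ * pd σ (Cvec lam lamCov ν) x - kron α μ * pd ν (Cvec lam lamCov σ) x)

/-- The conformal connection `𝚪^α_{μν} = Γ^α_{μν} − (1/(n−1)) δ^α_μ C_ν`. -/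
def bConn {n : ℕ} (lam lamCov : Fin n → (Fin n → ℝ) → Fin n → ℝ)
    (α μ ν : Fin n) (x : Fin n → ℝ) : ℝ :=
  Wconn lam lamCov α μ ν x - ((n : ℝ) - 1)⁻¹ * (kron α μ * Cvec lam lamCov ν x)

/-- The conformal connection `𝚪̂^α_{μν} = Γ̂^α_{μν} − (1/(2(n−1)))(δ^α_μ C_ν + δ^α_ν C_μ)`. -/
def hatConn {n : ℕ} (lam lamCov : Fin n → (Fin n → ℝ) → Fin n → ℝ)
    (α μ ν : Fin n) (x : Fin n → ℝ) : ℝ :=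
  symW lam lamCov α μ ν x
    - (2 * ((n : ℝ) - 1))⁻¹ * (kron α μ * Cvec lam lamCov ν x + kron α ν * Cvec lam lamCov μ x)

/-- `C_{μ ĥ|ν}`: covariant derivative of `C` with respect to `Γ̂`. -/
def Chat {n : ℕ} (lam lamCov : Fin n → (Fin n → ℝ) → Fin n → ℝ)
    (μ ν : Fin n) (x : Fin n → ℝ) : ℝ :=
  covD (symW lam lamCov) (Cvec lam lamCov) μ ν x

/-- The conformally invariant tensor `B^α_{μνσ}`. -/
def Btens {n : ℕ} (lam lamCov : Fin n → (Fin n → ℝ) → Fin n → ℝ)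
    (α μ ν σ : Fin n) (x : Fin n → ℝ) : ℝ :=
  curv (symW lam lamCov) α μ ν σ x
    - (2 * ((n : ℝ) - 1))⁻¹ *
      (kron α μ * pd ν (Cvec lam lamCov σ) x - kron α μ * pd σ (Cvec lam lamCov ν) x
        + kron α σ * Chat lam lamCov μ ν x - kron α ν * Chat lam lamCov μ σ x
        - (2 * ((n : ℝ) - 1))⁻¹ * kron α ν * Cvec lam lamCov μ x * Cvec lam lamCov σ x
        + (2 * ((n : ℝ) - 1))⁻¹ * kron α σ * Cvec lam lamCov μ x * Cvec lam lamCov ν x)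

/-- `C^σ := g^{σε} C_ε`. -/
def Cup {n : ℕ} (lam lamCov : Fin n → (Fin n → ℝ) → Fin n → ℝ)
    (σ : Fin n) (x : Fin n → ℝ) : ℝ :=
  ∑ ε, ginv lam σ ε x * Cvec lam lamCov ε x

/-- `C² := C_ε C^ε = g^{εη} C_ε C_η`. -/
def Csq {n : ℕ} (lam lamCov : Fin n → (Fin n → ℝ) → Fin n → ℝ)
    (x : Fin n → ℝ) : ℝ :=
  ∑ ε, Cvec lam lamCov ε x * Cup lam lamCov ε x

/-- The tensor `S_{μν} := ρ_{μ;ν} − ρ_μ ρ_ν − ½ g_{μν} ρ²`. -/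
def Stens {n : ℕ} (lam lamCov : Fin n → (Fin n → ℝ) → Fin n → ℝ)
    (ρ : (Fin n → ℝ) → ℝ) (μ ν : Fin n) (x : Fin n → ℝ) : ℝ :=
  covD (LC lam lamCov) (fun μ => pd μ ρ) μ ν x
    - pd μ ρ x * pd ν ρ x - (1/2) * gmet lamCov μ ν x * rhoSq lam ρ x

/-- The conformal connection `𝚪°^α_{μν} = Γ°^α_{μν} − (1/(n−1))(δ^α_μ C_ν + δ^α_ν C_μ − g_{μν} C^α)`. -/
def oConn {n : ℕ} (lam lamCov : Fin n → (Fin n → ℝ) → Fin n → ℝ)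
    (α μ ν : Fin n) (x : Fin n → ℝ) : ℝ :=
  LC lam lamCov α μ ν x
    - ((n : ℝ) - 1)⁻¹ *
      (kron α μ * Cvec lam lamCov ν x + kron α ν * Cvec lam lamCov μ x
        - gmet lamCov μ ν x * Cup lam lamCov α x)

end


noncomputable section ConfHelpers

variable {n : ℕ}

lemma pd_add {f g : (Fin n → ℝ) → ℝ} {x : Fin n → ℝ} (hf : DifferentiableAt ℝ f x)
    (hg : DifferentiableAt ℝ g x) (ν : Fin n) :
    pd ν (fun y => f y + g y) x = pd ν f x + pd ν g x := by
  simp [pd, fderiv_fun_add hf hg]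

lemma pd_sub {f g : (Fin n → ℝ) → ℝ} {x : Fin n → ℝ} (hf : DifferentiableAt ℝ f x)
    (hg : DifferentiableAt ℝ g x) (ν : Fin n) :
    pd ν (fun y => f y - g y) x = pd ν f x - pd ν g x := by
  simp [pd, fderiv_fun_sub hf hg]

lemma pd_const_mul {f : (Fin n → ℝ) → ℝ} {x : Fin n → ℝ} (hf : DifferentiableAt ℝ f x)
    (c : ℝ) (ν : Fin n) :
    pd ν (fun y => c * f y) x = c * pd ν f x := by
  simp [pd, fderiv_const_mul hf c]

lemma pd_mul {f g : (Fin n → ℝ) → ℝ} {x : Fin n → ℝ} (hf : DifferentiableAt ℝ f x)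
    (hg : DifferentiableAt ℝ g x) (ν : Fin n) :
    pd ν (fun y => f y * g y) x = f x * pd ν g x + g x * pd ν f x := by
  simp [pd, fderiv_fun_mul hf hg]

lemma pd_exp {g : (Fin n → ℝ) → ℝ} {x : Fin n → ℝ} (hg : DifferentiableAt ℝ g x) (ν : Fin n) :
    pd ν (fun y => Real.exp (g y)) x = Real.exp (g x) * pd ν g x := by
  simp [pd, fderiv_exp hg]

lemma contDiff_pd {f : (Fin n → ℝ) → ℝ} (hf : ContDiff ℝ (⊤ : ℕ∞) f) (ν : Fin n) :
    ContDiff ℝ (⊤ : ℕ∞) (pd ν f) :=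
  (hf.fderiv_right (by simp)).clm_apply contDiff_const

lemma sum_kron_left (f : Fin n → ℝ) (μ : Fin n) : ∑ ε, kron ε μ * f ε = f μ := by
  simp [kron, ite_mul, Finset.sum_ite_eq']

lemma sum_kron_right (f : Fin n → ℝ) (μ : Fin n) : ∑ ε, kron μ ε * f ε = f μ := by
  simp [kron, ite_mul, Finset.sum_ite_eq]

lemma sum_kron_diag : ∑ ε : Fin n, kron ε ε = n := by
  simp [kron]

section Smooth

variable {lam lamCov : Fin n → (Fin n → ℝ) → Fin n → ℝ}

lemma contDiff_Wconn (hlam : ∀ i μ, ContDiff ℝ (⊤ : ℕ∞) fun x => lam i x μ)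
    (hlamCov : ∀ i μ, ContDiff ℝ (⊤ : ℕ∞) fun x => lamCov i x μ) (α μ ν : Fin n) :
    ContDiff ℝ (⊤ : ℕ∞) (fun x => Wconn lam lamCov α μ ν x) := by
  unfold Wconn
  exact ContDiff.sum fun i _ => (hlam i α).mul (contDiff_pd (hlamCov i μ) ν)

lemma contDiff_symW (hlam : ∀ i μ, ContDiff ℝ (⊤ : ℕ∞) fun x => lam i x μ)
    (hlamCov : ∀ i μ, ContDiff ℝ (⊤ : ℕ∞) fun x => lamCov i x μ) (α μ ν : Fin n) :
    ContDiff ℝ (⊤ : ℕ∞) (fun x => symW lam lamCov α μ ν x) := by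
  unfold symW
  exact contDiff_const.mul ((contDiff_Wconn hlam hlamCov α μ ν).add
    (contDiff_Wconn hlam hlamCov α ν μ))

lemma contDiff_Cvec (hlam : ∀ i μ, ContDiff ℝ (⊤ : ℕ∞) fun x => lam i x μ)
    (hlamCov : ∀ i μ, ContDiff ℝ (⊤ : ℕ∞) fun x => lamCov i x μ) (μ : Fin n) :
    ContDiff ℝ (⊤ : ℕ∞) (fun x => Cvec lam lamCov μ x) := by
  unfold Cvec tors
  exact ContDiff.sum fun ε _ => (contDiff_Wconn hlam hlamCov ε ε μ).sub
    (contDiff_Wconn hlam hlamCov ε μ ε)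

end Smooth

lemma symW_symm (lam lamCov : Fin n → (Fin n → ℝ) → Fin n → ℝ) (α μ ν : Fin n) (x : Fin n → ℝ) :
    symW lam lamCov α μ ν x = symW lam lamCov α ν μ x := by
  unfold symW; ring

end ConfHelpers

noncomputable section ConfTrans

variable {n : ℕ} {lam lamCov : Fin n → (Fin n → ℝ) → Fin n → ℝ} {ρ : (Fin n → ℝ) → ℝ}

lemma Wconn_conf (hlamCov : ∀ i μ, ContDiff ℝ (⊤ : ℕ∞) fun x => lamCov i x μ)
    (hρ : ContDiff ℝ (⊤ : ℕ∞) ρ)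
    (hinv : ∀ (x : Fin n → ℝ) (μ ν : Fin n), ∑ i, lam i x μ * lamCov i x ν = kron μ ν)
    (α μ ν : Fin n) (x : Fin n → ℝ) :
    Wconn (confLam ρ lam) (confLamCov ρ lamCov) α μ ν x
      = Wconn lam lamCov α μ ν x + kron α μ * pd ν ρ x := by
  have hρx : DifferentiableAt ℝ ρ x := (hρ.differentiable (by simp)).differentiableAt
  have key : ∀ i : Fin n, pd ν (fun y => Real.exp (ρ y) * lamCov i y μ) x
      = Real.exp (ρ x) * pd ν (fun y => lamCov i y μ) x
        + lamCov i x μ * (Real.exp (ρ x) * pd ν ρ x) := by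
    intro i
    rw [pd_mul hρx.exp ((hlamCov i μ).differentiable (by simp)).differentiableAt ν,
      pd_exp hρx ν]
  unfold Wconn confLam confLamCov
  have step : ∀ i : Fin n,
      Real.exp (-(ρ x)) * lam i x α * pd ν (fun y => Real.exp (ρ y) * lamCov i y μ) x
        = lam i x α * pd ν (fun y => lamCov i y μ) x
          + pd ν ρ x * (lam i x α * lamCov i x μ) := by
    intro i
    rw [key i, Real.exp_neg]
    have hE : Real.exp (ρ x) ≠ 0 := Real.exp_ne_zero _
    field_simp
  calc (∑ i, Real.exp (-(ρ x)) * lam i x α * pd ν (fun y => Real.exp (ρ y) * lamCov i y μ) x)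
      = ∑ i, (lam i x α * pd ν (fun y => lamCov i y μ) x
          + pd ν ρ x * (lam i x α * lamCov i x μ)) := Finset.sum_congr rfl fun i _ => step i
    _ = (∑ i, lam i x α * pd ν (fun y => lamCov i y μ) x)
          + pd ν ρ x * ∑ i, lam i x α * lamCov i x μ := by
        rw [Finset.sum_add_distrib, Finset.mul_sum]
    _ = (∑ i, lam i x α * pd ν (fun y => lamCov i y μ) x) + kron α μ * pd ν ρ x := by
        rw [hinv x α μ]; ring

lemma Cvec_conf (hlamCov : ∀ i μ, ContDiff ℝ (⊤ : ℕ∞) fun x => lamCov i x μ)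
    (hρ : ContDiff ℝ (⊤ : ℕ∞) ρ)
    (hinv : ∀ (x : Fin n → ℝ) (μ ν : Fin n), ∑ i, lam i x μ * lamCov i x ν = kron μ ν)
    (μ : Fin n) (x : Fin n → ℝ) :
    Cvec (confLam ρ lam) (confLamCov ρ lamCov) μ x
      = Cvec lam lamCov μ x + ((n : ℝ) - 1) * pd μ ρ x := by
  unfold Cvec tors
  have step : ∀ ε : Fin n,
      Wconn (confLam ρ lam) (confLamCov ρ lamCov) ε ε μ x
        - Wconn (confLam ρ lam) (confLamCov ρ lamCov) ε μ ε x
      = (Wconn lam lamCov ε ε μ x - Wconn lam lamCov ε μ ε x)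
        + (kron ε ε * pd μ ρ x - kron ε μ * pd ε ρ x) := by
    intro ε
    rw [Wconn_conf hlamCov hρ hinv, Wconn_conf hlamCov hρ hinv]; ring
  rw [Finset.sum_congr rfl fun ε _ => step ε]
  simp only [Finset.sum_add_distrib, Finset.sum_sub_distrib]
  have h1 : ∑ ε : Fin n, kron ε ε * pd μ ρ x = (n : ℝ) * pd μ ρ x := by
    rw [← Finset.sum_mul, sum_kron_diag]
  rw [h1, sum_kron_left (fun ε => pd ε ρ x) μ]
  ring

lemma symW_conf (hlamCov : ∀ i μ, ContDiff ℝ (⊤ : ℕ∞) fun x => lamCov i x μ)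
    (hρ : ContDiff ℝ (⊤ : ℕ∞) ρ)
    (hinv : ∀ (x : Fin n → ℝ) (μ ν : Fin n), ∑ i, lam i x μ * lamCov i x ν = kron μ ν)
    (α μ ν : Fin n) (x : Fin n → ℝ) :
    symW (confLam ρ lam) (confLamCov ρ lamCov) α μ ν x
      = symW lam lamCov α μ ν x
        + (1/2) * (kron α μ * pd ν ρ x + kron α ν * pd μ ρ x) := by
  unfold symW
  rw [Wconn_conf hlamCov hρ hinv, Wconn_conf hlamCov hρ hinv]; ring

lemma hatConn_conf (hn : 2 ≤ n)
    (hlamCov : ∀ i μ, ContDiff ℝ (⊤ : ℕ∞) fun x => lamCov i x μ)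
    (hρ : ContDiff ℝ (⊤ : ℕ∞) ρ)
    (hinv : ∀ (x : Fin n → ℝ) (μ ν : Fin n), ∑ i, lam i x μ * lamCov i x ν = kron μ ν)
    (α μ ν : Fin n) :
    hatConn (confLam ρ lam) (confLamCov ρ lamCov) α μ ν = hatConn lam lamCov α μ ν := by
  funext x
  have hne : (n : ℝ) - 1 ≠ 0 := by
    have : (2 : ℝ) ≤ (n : ℝ) := by exact_mod_cast hn
    linarith
  unfold hatConn
  rw [symW_conf hlamCov hρ hinv, Cvec_conf hlamCov hρ hinv, Cvec_conf hlamCov hρ hinv]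
  field_simp
  ring

end ConfTrans

noncomputable section BtensCurv

variable {n : ℕ} {lam lamCov : Fin n → (Fin n → ℝ) → Fin n → ℝ}

lemma sum_hat_mul (α μ ν σ : Fin n) (x : Fin n → ℝ) :
    (∑ ε, hatConn lam lamCov ε μ σ x * hatConn lam lamCov α ε ν x)
      = (∑ ε, symW lam lamCov ε μ σ x * symW lam lamCov α ε ν x)
        - (2*((n:ℝ)-1))⁻¹ * Cvec lam lamCov ν x * symW lam lamCov α μ σ x
        - (2*((n:ℝ)-1))⁻¹ * kron α ν * (∑ ε, symW lam lamCov ε μ σ x * Cvec lam lamCov ε x)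
        - (2*((n:ℝ)-1))⁻¹ * Cvec lam lamCov σ x * symW lam lamCov α μ ν x
        - (2*((n:ℝ)-1))⁻¹ * Cvec lam lamCov μ x * symW lam lamCov α ν σ x
        + (2*((n:ℝ)-1))⁻¹ ^ 2 *
          (kron α μ * Cvec lam lamCov σ x * Cvec lam lamCov ν x
            + kron α σ * Cvec lam lamCov μ x * Cvec lam lamCov ν x
            + 2 * kron α ν * Cvec lam lamCov μ x * Cvec lam lamCov σ x) := by
  set κ : ℝ := (2*((n:ℝ)-1))⁻¹ with hκ
  have expand : ∀ ε : Fin n, hatConn lam lamCov ε μ σ x * hatConn lam lamCov α ε ν x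
      = symW lam lamCov ε μ σ x * symW lam lamCov α ε ν x
        - (κ * Cvec lam lamCov ν x) * (kron α ε * symW lam lamCov ε μ σ x)
        - (κ * kron α ν) * (symW lam lamCov ε μ σ x * Cvec lam lamCov ε x)
        - (κ * Cvec lam lamCov σ x) * (kron ε μ * symW lam lamCov α ε ν x)
        - (κ * Cvec lam lamCov μ x) * (kron ε σ * symW lam lamCov α ε ν x)
        + (κ^2 * (Cvec lam lamCov σ x * Cvec lam lamCov ν x)) * (kron ε μ * kron α ε)
        + (κ^2 * (Cvec lam lamCov σ x * kron α ν)) * (kron ε μ * Cvec lam lamCov ε x)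
        + (κ^2 * (Cvec lam lamCov μ x * Cvec lam lamCov ν x)) * (kron ε σ * kron α ε)
        + (κ^2 * (Cvec lam lamCov μ x * kron α ν)) * (kron ε σ * Cvec lam lamCov ε x) := by
    intro ε
    unfold hatConn
    ring
  rw [Finset.sum_congr rfl fun ε _ => expand ε]
  simp only [Finset.sum_add_distrib, Finset.sum_sub_distrib, ← Finset.mul_sum]
  rw [sum_kron_right (fun ε => symW lam lamCov ε μ σ x) α,
    sum_kron_left (fun ε => symW lam lamCov α ε ν x) μ,
    sum_kron_left (fun ε => symW lam lamCov α ε ν x) σ,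
    sum_kron_left (fun ε => kron α ε) μ,
    sum_kron_left (fun ε => Cvec lam lamCov ε x) μ,
    sum_kron_left (fun ε => kron α ε) σ,
    sum_kron_left (fun ε => Cvec lam lamCov ε x) σ,
    symW_symm lam lamCov α σ ν]
  ring

lemma Btens_eq_curv_hatConn
    (hlam : ∀ i μ, ContDiff ℝ (⊤ : ℕ∞) fun x => lam i x μ)
    (hlamCov : ∀ i μ, ContDiff ℝ (⊤ : ℕ∞) fun x => lamCov i x μ)
    (α μ ν σ : Fin n) (x : Fin n → ℝ) :
    Btens lam lamCov α μ ν σ x = curv (hatConn lam lamCov) α μ ν σ x := by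
  have hA : ∀ a b c : Fin n, DifferentiableAt ℝ (fun y => symW lam lamCov a b c y) x :=
    fun a b c => ((contDiff_symW hlam hlamCov a b c).differentiable (by simp)).differentiableAt
  have hC : ∀ a : Fin n, DifferentiableAt ℝ (fun y => Cvec lam lamCov a y) x :=
    fun a => ((contDiff_Cvec hlam hlamCov a).differentiable (by simp)).differentiableAt
  have pdhat : ∀ l a b c : Fin n, pd l (hatConn lam lamCov a b c) x
      = pd l (symW lam lamCov a b c) x
        - (2*((n:ℝ)-1))⁻¹ * (kron a b * pd l (Cvec lam lamCov c) x
            + kron a c * pd l (Cvec lam lamCov b) x) := by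
    intro l a b c
    have h1 : hatConn lam lamCov a b c = fun y => symW lam lamCov a b c y
        - (2*((n:ℝ)-1))⁻¹ * (kron a b * Cvec lam lamCov c y + kron a c * Cvec lam lamCov b y) :=
      rfl
    rw [h1, pd_sub (hA a b c) ((((hC c).const_mul _).fun_add ((hC b).const_mul _)).const_mul _),
      pd_const_mul (((hC c).const_mul _).fun_add ((hC b).const_mul _)),
      pd_add ((hC c).const_mul _) ((hC b).const_mul _),
      pd_const_mul (hC c), pd_const_mul (hC b)]
  unfold Btens Chat covD curv
  rw [pdhat ν α μ σ, pdhat σ α μ ν, sum_hat_mul α μ ν σ x, sum_hat_mul α μ σ ν x,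
    symW_symm lam lamCov α σ ν]
  ring

end BtensCurv

theorem Btens_conformally_invariant
    {n : ℕ} (hn : 2 ≤ n)
    (lam lamCov : Fin n → (Fin n → ℝ) → Fin n → ℝ)
    (hlam : ∀ i μ, ContDiff ℝ (⊤ : ℕ∞) fun x => lam i x μ)
    (hlamCov : ∀ i μ, ContDiff ℝ (⊤ : ℕ∞) fun x => lamCov i x μ)
    (hinv : ∀ (x : Fin n → ℝ) (μ ν : Fin n), ∑ i, lam i x μ * lamCov i x ν = kron μ ν)
    (hinv' : ∀ (x : Fin n → ℝ) (i j : Fin n), ∑ μ, lam i x μ * lamCov j x μ = kron i j)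
    :
    ∀ (ρ : (Fin n → ℝ) → ℝ), ContDiff ℝ (⊤ : ℕ∞) ρ →
      ∀ (x : Fin n → ℝ) (α μ ν σ : Fin n),
        Btens (confLam ρ lam) (confLamCov ρ lamCov) α μ ν σ x
          = Btens lam lamCov α μ ν σ x := by
  intro ρ hρ x α μ ν σ
  have hlamB : ∀ i μ, ContDiff ℝ (⊤ : ℕ∞) fun x => confLam ρ lam i x μ := fun i μ =>
    (Real.contDiff_exp.comp hρ.neg).mul (hlam i μ)
  have hlamCovB : ∀ i μ, ContDiff ℝ (⊤ : ℕ∞) fun x => confLamCov ρ lamCov i x μ := fun i μ =>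
    (Real.contDiff_exp.comp hρ).mul (hlamCov i μ)
  rw [Btens_eq_curv_hatConn hlamB hlamCovB, Btens_eq_curv_hatConn hlam hlamCov]
  have hh : hatConn (confLam ρ lam) (confLamCov ρ lamCov) = hatConn lam lamCov := by
    funext a b c
    exact hatConn_conf hn hlamCov hρ hinv a b c
  rw [hh]
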